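/- The number of forests on vertex set [n] consisting of k rooted trees with a prescribed set of k roots equals k · n^{n-k-1}. -/

import Mathlib

/-!
A rooted forest with root set `R` is the same thing as its parent map `f : V → V`: `f` fixes `R`,
every orbit of `f` reaches `R`, the forest is the graph with the edges `v — f v`, and `f v` is the
neighbour of `v` one step closer to its root (the depth of `v` is its distance to its root).
So it suffices to count parent maps; write `A(R)` for their number and `n = |V|`.

For `s ∉ R`, resetting `f s := s` sends a parent map for `R` to one for `R ∪ {s}`, and the fibre
over `g` consists of the `n - b_g(s)` choices of `f s` outside the basin of `s`, i.e. outside the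
set of vertices whose `g`-root is `s`. Conjugating by the transposition of two roots shows that all
`|R| + 1` roots have the same total basin size `∑_g b_g(r) = n · A(R ∪ {s}) / (|R| + 1)`. Hence
`(|R| + 1) · A(R) = |R| · n · A(R ∪ {s})`, and downward induction from `A(V) = 1` gives
`A(R) · n = |R| · n ^ (n - |R|)`.
-/

open Finset Function

variable {V : Type*}

theorem Equiv.conj_iterate_apply {W : Type*} (e : V ≃ W) (f : V → V) (j : ℕ) (v : V) :
    (e.conj f)^[j] (e v) = e (f^[j] v) :=
  ((Semiconj.iterate_right (f := e) (fun x => by simp) j) v).symm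

structure IsParentMap (R : Finset V) (f : V → V) : Prop where
  apply_of_mem : ∀ r ∈ R, f r = r
  exists_iterate_mem : ∀ v, ∃ j, f^[j] v ∈ R

namespace ParentMap

-- `root R f v` is the first point of the orbit of `v` in `R`; `depth` takes the junk value `0`
-- when the orbit never meets `R`.
open Classical in
noncomputable def depth (R : Finset V) (f : V → V) (v : V) : ℕ :=
  if h : ∃ j, f^[j] v ∈ R then Nat.find h else 0

noncomputable def root (R : Finset V) (f : V → V) (v : V) : V :=
  f^[depth R f v] v

variable {R : Finset V} {f : V → V} {v : V} {i j : ℕ}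

theorem depth_le (h : f^[j] v ∈ R) : depth R f v ≤ j := by
  classical
  rw [depth, dif_pos ⟨j, h⟩]
  exact Nat.find_min' _ h

theorem iterate_notMem_of_lt_depth (h : i < depth R f v) : f^[i] v ∉ R := by
  classical
  rw [depth] at h
  split_ifs at h with hex
  · exact Nat.find_min hex h
  · exact absurd h (Nat.not_lt_zero i)

theorem depth_eq_zero_of_mem (hv : v ∈ R) : depth R f v = 0 :=
  Nat.le_zero.1 (depth_le (j := 0) hv)

theorem root_of_mem (hv : v ∈ R) : root R f v = v := by
  rw [root, depth_eq_zero_of_mem hv, iterate_zero_apply]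

theorem exists_iterate_mem_of_lt (μ : V → ℕ) (hμ : ∀ v ∉ R, μ (f v) < μ v) (v : V) :
    ∃ j, f^[j] v ∈ R := by
  induction hv : μ v using Nat.strong_induction_on generalizing v with
  | _ m ih =>
    by_cases hvR : v ∈ R
    · exact ⟨0, hvR⟩
    · obtain ⟨j, hj⟩ := ih _ (hv ▸ hμ v hvR) (f v) rfl
      exact ⟨j + 1, by rwa [iterate_succ_apply]⟩

end ParentMap

namespace IsParentMap

open ParentMap

variable {R : Finset V} {f : V → V} {v : V} {j : ℕ}

theorem root_mem (hf : IsParentMap R f) (v : V) : root R f v ∈ R := by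
  classical
  have hex := hf.exists_iterate_mem v
  rw [root, depth, dif_pos hex]
  exact Nat.find_spec hex

theorem depth_eq_zero_iff (hf : IsParentMap R f) : depth R f v = 0 ↔ v ∈ R :=
  ⟨fun h => by simpa [root, h] using hf.root_mem v, depth_eq_zero_of_mem⟩

theorem depth_apply_add_one (hf : IsParentMap R f) (hv : v ∉ R) :
    depth R f (f v) + 1 = depth R f v := by
  have hpos : 0 < depth R f v := Nat.pos_of_ne_zero (mt hf.depth_eq_zero_iff.1 hv)
  have hle : depth R f (f v) ≤ depth R f v - 1 := by
    apply depth_le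
    rw [← iterate_succ_apply, Nat.succ_eq_add_one, Nat.sub_one_add_one hpos.ne']
    exact hf.root_mem v
  have hge : depth R f v ≤ depth R f (f v) + 1 := by
    apply depth_le
    rw [iterate_succ_apply]
    exact hf.root_mem (f v)
  omega

theorem apply_ne_self (hf : IsParentMap R f) (hv : v ∉ R) : f v ≠ v := fun h => by
  simpa [h] using hf.depth_apply_add_one hv

theorem root_apply (hf : IsParentMap R f) (v : V) : root R f (f v) = root R f v := by
  by_cases hv : v ∈ R
  · rw [hf.apply_of_mem v hv]
  · rw [root, root, ← hf.depth_apply_add_one hv, iterate_succ_apply]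

theorem root_iterate (hf : IsParentMap R f) (v : V) (j : ℕ) :
    root R f (f^[j] v) = root R f v := by
  induction j with
  | zero => rfl
  | succ j ih => rw [iterate_succ_apply', hf.root_apply, ih]

theorem root_eq_of_iterate_eq {r : V} (hf : IsParentMap R f) (h : f^[j] v = r) (hr : r ∈ R) :
    root R f v = r := by
  rw [← hf.root_iterate v j, h, root_of_mem hr]

theorem iterate_eq_root (hf : IsParentMap R f) (h : depth R f v ≤ j) : f^[j] v = root R f v := by
  rw [← Nat.sub_add_cancel h, iterate_add_apply]
  exact iterate_fixed (hf.apply_of_mem _ (hf.root_mem v)) _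

theorem not_isPeriodicPt (hf : IsParentMap R f) (hv : v ∉ R) (hj : 0 < j) :
    ¬ IsPeriodicPt f j v := fun hper => by
  have h := (hper.const_mul (depth R f v)).eq
  rw [hf.iterate_eq_root (Nat.le_mul_of_pos_right _ hj)] at h
  exact hv (h ▸ hf.root_mem v)

end IsParentMap

section Conj

open ParentMap

variable {R : Finset V} {f : V → V} (σ : Equiv.Perm V) (hσ : ∀ x, σ x ∈ R ↔ x ∈ R)
include hσ

theorem IsParentMap.conj (hf : IsParentMap R f) : IsParentMap R (σ.conj f) where
  apply_of_mem r hr := by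
    have hr' : σ.symm r ∈ R := by rwa [← hσ, Equiv.apply_symm_apply]
    rw [Equiv.conj_apply, hf.apply_of_mem _ hr', Equiv.apply_symm_apply]
  exists_iterate_mem v := by
    obtain ⟨j, hj⟩ := hf.exists_iterate_mem (σ.symm v)
    refine ⟨j, ?_⟩
    rwa [← σ.apply_symm_apply v, σ.conj_iterate_apply, hσ]

theorem isParentMap_conj_iff : IsParentMap R (σ.conj f) ↔ IsParentMap R f := by
  refine ⟨fun hf => ?_, fun hf => hf.conj σ hσ⟩
  have := hf.conj σ.symm fun x => by rw [← hσ, Equiv.apply_symm_apply]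
  rwa [← Equiv.conj_symm, Equiv.symm_apply_apply] at this

theorem IsParentMap.root_conj (hf : IsParentMap R f) (v : V) :
    root R (σ.conj f) (σ v) = σ (root R f v) :=
  (hf.conj σ hσ).root_eq_of_iterate_eq (σ.conj_iterate_apply f _ v)
    ((hσ _).2 (hf.root_mem v))

end Conj

section Update

open ParentMap

variable {T : Set V} {f g : V → V} {v : V} {j : ℕ}

theorem iterate_eq_of_eqOn_compl (hfg : Set.EqOn f g Tᶜ) (h : ∀ i < j, f^[i] v ∉ T) :
    f^[j] v = g^[j] v := by
  induction j with
  | zero => rfl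
  | succ j ih =>
    rw [iterate_succ_apply', iterate_succ_apply', ← ih fun i hi => h i (by omega)]
    exact hfg (h j j.lt_succ_self)

theorem exists_iterate_mem_of_eqOn_compl (hfg : Set.EqOn f g Tᶜ) (h : f^[j] v ∈ T) :
    ∃ i, g^[i] v ∈ T := by
  induction j generalizing v with
  | zero => exact ⟨0, h⟩
  | succ j ih =>
    by_cases hv : v ∈ T
    · exact ⟨0, hv⟩
    · obtain ⟨i, hi⟩ := ih (v := f v) (by rwa [← iterate_succ_apply])
      exact ⟨i + 1, by rwa [iterate_succ_apply, ← hfg hv]⟩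

variable [DecidableEq V] {R : Finset V} {s : V}

theorem IsParentMap.update_self (hf : IsParentMap R f) (s : V) :
    IsParentMap (insert s R) (update f s s) where
  apply_of_mem r hr := by
    by_cases h : r = s
    · rw [h, Function.update_self]
    · rw [update_of_ne h, hf.apply_of_mem r ((mem_insert.1 hr).resolve_left h)]
  exists_iterate_mem v := by
    obtain ⟨j, hj⟩ := hf.exists_iterate_mem v
    have hj' : f^[j] v ∈ (↑(insert s R) : Set V) := mem_insert_of_mem hj
    refine exists_iterate_mem_of_eqOn_compl (fun x (hx : x ∉ _) => ?_) hj'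
    exact (update_of_ne (show x ≠ s by rintro rfl; exact hx (mem_insert_self x R)) s f).symm

theorem IsParentMap.isParentMap_update_iff (hg : IsParentMap (insert s R) g) (hs : s ∉ R)
    (v : V) : IsParentMap R (update g s v) ↔ root (insert s R) g v ≠ s := by
  have hroot (w : V) : (update g s v)^[depth (insert s R) g w] w = root (insert s R) g w := by
    refine (iterate_eq_of_eqOn_compl (T := ↑(insert s R)) (fun x (hx : x ∉ _) => ?_)
      fun i hi => iterate_notMem_of_lt_depth hi).symm
    exact (update_of_ne (show x ≠ s by rintro rfl; exact hx (mem_insert_self x R)) v g).symm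
  constructor
  · intro hh hvs
    apply hh.not_isPeriodicPt hs (Nat.succ_pos (depth (insert s R) g v))
    change (update g s v)^[_ + 1] s = s
    rw [iterate_succ_apply, Function.update_self, hroot, hvs]
  · intro hv
    have hvR : root (insert s R) g v ∈ R := (mem_insert.1 (hg.root_mem v)).resolve_left hv
    refine ⟨fun r hr => ?_, fun w => ?_⟩
    · rw [update_of_ne (ne_of_mem_of_not_mem hr hs), hg.apply_of_mem r (mem_insert_of_mem hr)]
    · by_cases hw : root (insert s R) g w = s
      · -- once the orbit reaches `s`, it jumps to `v` and then follows the orbit of `v`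
        refine ⟨depth (insert s R) g v + (1 + depth (insert s R) g w), ?_⟩
        rw [iterate_add_apply, iterate_add_apply, hroot w, hw, iterate_one, Function.update_self,
          hroot]
        exact hvR
      · exact ⟨_, hroot w ▸ (mem_insert.1 (hg.root_mem w)).resolve_left hw⟩

end Update

section Count

open ParentMap

variable [Fintype V] [DecidableEq V] {R : Finset V} {f g : V → V} {r s : V}

open Classical in
noncomputable def parentMaps (R : Finset V) : Finset (V → V) :=
  univ.filter (IsParentMap R)

theorem mem_parentMaps : f ∈ parentMaps R ↔ IsParentMap R f := by
  classical
  simp [parentMaps]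

theorem card_subtype_isParentMap (R : Finset V) :
    Nat.card {f // IsParentMap R f} = #(parentMaps R) := by
  classical
  rw [Nat.card_eq_fintype_card, Fintype.card_subtype, parentMaps]

theorem parentMaps_univ : parentMaps (univ : Finset V) = {id} := by
  ext f
  rw [mem_parentMaps, mem_singleton]
  refine ⟨fun hf => funext fun v => hf.apply_of_mem v (mem_univ v), ?_⟩
  rintro rfl
  exact ⟨fun _ _ => rfl, fun v => ⟨0, mem_univ _⟩⟩

theorem card_filter_update_eq (hs : s ∉ R) (hg : IsParentMap (insert s R) g) :
    #{f ∈ parentMaps R | update f s s = g} = #{v | root (insert s R) g v ≠ s} := by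
  refine card_bij' (fun f _ => f s) (fun v _ => update g s v) ?_ ?_ ?_ ?_
  · intro f hf
    obtain ⟨hmem, rfl⟩ := mem_filter.1 hf
    rw [mem_filter, ← hg.isParentMap_update_iff hs, update_idem, update_eq_self]
    exact ⟨mem_univ _, mem_parentMaps.1 hmem⟩
  · intro v hv
    rw [mem_filter, ← hg.isParentMap_update_iff hs] at hv
    rw [mem_filter, mem_parentMaps, update_idem, update_eq_self_iff]
    exact ⟨hv.2, (hg.apply_of_mem s (mem_insert_self s R)).symm⟩
  · intro f hf
    obtain ⟨-, rfl⟩ := mem_filter.1 hf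
    rw [update_idem, update_eq_self]
  · intro v _
    exact Function.update_self s v g

theorem card_parentMaps_eq_sum (hs : s ∉ R) :
    #(parentMaps R) = ∑ g ∈ parentMaps (insert s R), #{v | root (insert s R) g v ≠ s} := by
  rw [card_eq_sum_card_fiberwise (f := fun f => update f s s)
    fun f hf => mem_parentMaps.2 ((mem_parentMaps.1 hf).update_self s)]
  exact sum_congr rfl fun g hg => card_filter_update_eq hs (mem_parentMaps.1 hg)

theorem IsParentMap.card_root_conj (hf : IsParentMap R f) (σ : Equiv.Perm V)
    (hσ : ∀ x, σ x ∈ R ↔ x ∈ R) (r : V) :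
    #{v | root R (σ.conj f) v = σ r} = #{v | root R f v = r} := by
  refine (card_equiv σ fun v => ?_).symm
  simp [hf.root_conj σ hσ]

theorem sum_card_root_eq (hr : r ∈ R) (hs : s ∈ R) :
    ∑ f ∈ parentMaps R, #{v | root R f v = r} =
      ∑ f ∈ parentMaps R, #{v | root R f v = s} := by
  set σ := Equiv.swap r s
  have hσ (x : V) : σ x ∈ R ↔ x ∈ R := by
    rcases eq_or_ne x r with rfl | hxr
    · simp [σ, hr, hs]
    rcases eq_or_ne x s with rfl | hxs
    · simp [σ, hr, hs]
    rw [Equiv.swap_apply_of_ne_of_ne hxr hxs]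
  refine sum_equiv σ.conj (fun f => ?_) fun f hf => ?_
  · rw [mem_parentMaps, mem_parentMaps, isParentMap_conj_iff σ hσ]
  · rw [← Equiv.swap_apply_left r s, (mem_parentMaps.1 hf).card_root_conj σ hσ]

theorem IsParentMap.sum_card_root (hf : IsParentMap R f) :
    ∑ r ∈ R, #{v | root R f v = r} = Fintype.card V := by
  rw [← card_univ, card_eq_sum_card_fiberwise fun v _ => hf.root_mem v]

theorem card_parentMaps_recurrence (hs : s ∉ R) :
    (#R + 1) * #(parentMaps R) = #R * (Fintype.card V * #(parentMaps (insert s R))) := by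
  set P := parentMaps (insert s R)
  set B := ∑ g ∈ P, #{v | root (insert s R) g v = s}
  have hsplit : #(parentMaps R) + B = Fintype.card V * #P := by
    rw [card_parentMaps_eq_sum hs, ← sum_add_distrib, mul_comm, ← smul_eq_mul, ← sum_const]
    refine sum_congr rfl fun g _ => ?_
    rw [add_comm, card_filter_add_card_filter_not, card_univ]
  have hB : (#R + 1) * B = Fintype.card V * #P := by
    calc (#R + 1) * B = ∑ r ∈ insert s R, ∑ g ∈ P, #{v | root (insert s R) g v = r} := by
          rw [sum_congr rfl fun r hr => sum_card_root_eq hr (mem_insert_self s R), sum_const,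
            card_insert_of_notMem hs, smul_eq_mul]
      _ = ∑ g ∈ P, Fintype.card V := by
          rw [sum_comm]
          exact sum_congr rfl fun g hg => (mem_parentMaps.1 hg).sum_card_root
      _ = Fintype.card V * #P := by rw [sum_const, smul_eq_mul, mul_comm]
  have := congrArg ((#R + 1) * ·) hsplit
  simp only [mul_add, hB] at this
  linarith

theorem card_parentMaps_mul_card (R : Finset V) :
    #(parentMaps R) * Fintype.card V = #R * Fintype.card V ^ (Fintype.card V - #R) := by
  induction hm : #Rᶜ generalizing R with
  | zero =>
    rw [card_eq_zero, compl_eq_empty_iff] at hm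
    simp [hm, parentMaps_univ]
  | succ m ih =>
    obtain ⟨s, hs⟩ : Rᶜ.Nonempty := card_pos.1 (by omega)
    rw [mem_compl] at hs
    have hcard := card_compl_add_card R
    have hlt : #R < Fintype.card V := by omega
    have ih' := ih (insert s R) (by rw [card_compl, card_insert_of_notMem hs]; omega)
    rw [card_insert_of_notMem hs] at ih'
    have hexp : Fintype.card V - #R = Fintype.card V - (#R + 1) + 1 := by omega
    apply Nat.eq_of_mul_eq_mul_left (Nat.succ_pos #R)
    calc (#R + 1) * (#(parentMaps R) * Fintype.card V)
        = #R * (#(parentMaps (insert s R)) * Fintype.card V) * Fintype.card V := by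
          rw [← mul_assoc, card_parentMaps_recurrence hs]; ring
      _ = (#R + 1) * (#R * Fintype.card V ^ (Fintype.card V - #R)) := by
          rw [ih', hexp, pow_succ]; ring

end Count

section Graph

open ParentMap SimpleGraph

def parentGraph (f : V → V) : SimpleGraph V :=
  SimpleGraph.fromRel fun v w => f v = w

variable {R : Finset V} {f g : V → V} {v w : V}

theorem parentGraph_adj : (parentGraph f).Adj v w ↔ v ≠ w ∧ (f v = w ∨ f w = v) := by
  simp [parentGraph]

theorem parentGraph_adj_apply (h : f v ≠ v) : (parentGraph f).Adj v (f v) :=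
  parentGraph_adj.2 ⟨h.symm, .inl rfl⟩

theorem exists_walk_iterate (f : V → V) (v : V) (j : ℕ) :
    ∃ p : (parentGraph f).Walk v (f^[j] v), p.length ≤ j := by
  induction j generalizing v with
  | zero => exact ⟨.nil, le_rfl⟩
  | succ j ih =>
    obtain ⟨p, hp⟩ := ih (f v)
    have e : f^[j] (f v) = f^[j + 1] v := (iterate_succ_apply f j v).symm
    by_cases h : f v = v
    · exact ⟨p.copy h e, by rw [Walk.length_copy]; exact hp.trans j.le_succ⟩
    · exact ⟨(Walk.cons (parentGraph_adj_apply h) p).copy rfl e, by simpa using hp⟩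

theorem reachable_root (R : Finset V) (f : V → V) (v : V) :
    (parentGraph f).Reachable v (root R f v) :=
  (exists_walk_iterate f v _).choose.reachable

namespace IsParentMap

variable (hf : IsParentMap R f)
include hf

theorem root_eq_of_reachable (h : (parentGraph f).Reachable v w) : root R f v = root R f w := by
  obtain ⟨p⟩ := h
  induction p with
  | nil => rfl
  | cons hadj _ ih =>
    rcases (parentGraph_adj.1 hadj).2 with rfl | rfl
    · exact (hf.root_apply _).symm.trans ih
    · exact (hf.root_apply _).trans ih

theorem existsUnique_root (v : V) : ∃! r, r ∈ R ∧ (parentGraph f).Reachable v r :=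
  ⟨root R f v, ⟨hf.root_mem v, reachable_root R f v⟩, fun _ ⟨hr, hreach⟩ =>
    ((hf.root_eq_of_reachable hreach).trans (root_of_mem hr)).symm⟩

theorem depth_le_depth_add_one_of_adj (h : (parentGraph f).Adj v w) :
    depth R f v ≤ depth R f w + 1 := by
  obtain ⟨hne, rfl | rfl⟩ := parentGraph_adj.1 h
  · by_cases hv : v ∈ R
    · simp [depth_eq_zero_of_mem hv]
    · exact (hf.depth_apply_add_one hv).ge
  · by_cases hw : w ∈ R
    · exact absurd (hf.apply_of_mem w hw) hne
    · have := hf.depth_apply_add_one hw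
      omega

theorem depth_le_length {r : V} (hr : r ∈ R) (p : (parentGraph f).Walk v r) :
    depth R f v ≤ p.length := by
  induction p with
  | nil => simp [depth_eq_zero_of_mem hr]
  | cons hadj _ ih =>
    have := hf.depth_le_depth_add_one_of_adj hadj
    have := ih hr
    rw [Walk.length_cons]
    omega

theorem dist_root (v : V) : (parentGraph f).dist v (root R f v) = depth R f v := by
  refine le_antisymm ?_ ?_
  · obtain ⟨p, hp⟩ := exists_walk_iterate f v (depth R f v)
    exact (dist_le p).trans hp
  · obtain ⟨p, hp⟩ := (reachable_root R f v).exists_walk_length_eq_dist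
    exact hp ▸ hf.depth_le_length (hf.root_mem v) p

theorem eq_apply_of_adj (h : (parentGraph f).Adj v w) (hle : depth R f w ≤ depth R f v) :
    w = f v := by
  obtain ⟨hne, hfv | rfl⟩ := parentGraph_adj.1 h
  · exact hfv.symm
  · by_cases hw : w ∈ R
    · exact absurd (hf.apply_of_mem w hw) hne
    · have := hf.depth_apply_add_one hw
      omega

theorem isAcyclic : (parentGraph f).IsAcyclic := by
  classical
  intro v c hc
  obtain ⟨u, hu, hmax⟩ := c.support.toFinset.exists_max_image (depth R f) ⟨v, by simp⟩
  rw [List.mem_toFinset] at hu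
  have hc' := hc.rotate hu
  have hle (x : V) (hx : x ∈ (c.rotate u hu).support) : depth R f x ≤ depth R f u :=
    hmax x (by simpa using hx)
  -- a cycle through a vertex of maximal depth enters and leaves it through its parent
  have hsnd := hf.eq_apply_of_adj ((c.rotate u hu).adj_snd hc'.not_nil)
    (hle _ (Walk.getVert_mem_support _ _))
  have hpen := hf.eq_apply_of_adj ((c.rotate u hu).adj_penultimate hc'.not_nil).symm
    (hle _ (Walk.getVert_mem_support _ _))
  exact hc'.snd_ne_penultimate (hsnd.trans hpen.symm)

theorem eq_of_parentGraph_eq (hg : IsParentMap R g) (h : parentGraph f = parentGraph g) :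
    f = g := by
  have hroot (v : V) : root R g v = root R f v :=
    (hf.existsUnique_root v).unique ⟨hg.root_mem v, h ▸ reachable_root R g v⟩
      ⟨hf.root_mem v, reachable_root R f v⟩
  have hdepth (v : V) : depth R g v = depth R f v := by
    rw [← hf.dist_root, ← hg.dist_root, h, hroot]
  funext v
  by_cases hv : v ∈ R
  · rw [hf.apply_of_mem v hv, hg.apply_of_mem v hv]
  · have hadj : (parentGraph f).Adj v (g v) := h ▸ parentGraph_adj_apply (hg.apply_ne_self hv)
    refine (hf.eq_apply_of_adj hadj ?_).symm
    rw [← hdepth, ← hdepth, ← hg.depth_apply_add_one hv]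
    exact Nat.le_succ _

end IsParentMap

end Graph

namespace SimpleGraph

variable {G : SimpleGraph V} {u v w w' : V}

theorem Reachable.exists_adj_dist_add_one (h : G.Reachable u v) (hne : u ≠ v) :
    ∃ w, G.Adj v w ∧ G.dist u w + 1 = G.dist u v := by
  obtain ⟨p, hp⟩ := h.exists_walk_length_eq_dist
  have hnil : ¬ p.Nil := fun hnil => hne hnil.eq
  refine ⟨p.penultimate, (p.adj_penultimate hnil).symm, ?_⟩
  have hle : G.dist u p.penultimate ≤ p.length - 1 := p.length_dropLast ▸ dist_le p.dropLast
  have hpos : 0 < G.dist u v := h.pos_dist_of_ne hne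
  rcases (p.adj_penultimate hnil).diff_dist_adj (u := u) with h' | h' | h' <;> omega

theorem IsAcyclic.eq_of_adj_of_dist_add_one (hG : G.IsAcyclic) (hreach : G.Reachable u v)
    (hw : G.Adj v w) (hw' : G.Adj v w') (hdw : G.dist u w + 1 = G.dist u v)
    (hdw' : G.dist u w' + 1 = G.dist u v) : w = w' := by
  classical
  obtain ⟨p, hp, -⟩ := hreach.exists_path_of_dist
  suffices key : ∀ x, G.Adj v x → G.dist u x + 1 = G.dist u v → x = p.penultimate from
    (key w hw hdw).trans (key w' hw' hdw').symm
  intro x hx hdx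
  obtain ⟨q, hq, hql⟩ := (hreach.trans hx.reachable).exists_path_of_dist
  have hv : v ∉ q.support := fun hv => by
    have := (dist_le (q.takeUntil v hv)).trans (q.length_takeUntil_le_length hv)
    omega
  exact hG.eq_penultimate_of_adj_end hp hx
    (hG.mem_support_of_ne_mem_support_of_adj_of_isPath hp hq hx hv)

end SimpleGraph

section Forest

open SimpleGraph ParentMap

variable {R : Finset V}

theorem exists_isParentMap_parentGraph_eq {G : SimpleGraph V} (hG : G.IsAcyclic)
    (h : ∀ v, ∃! r, r ∈ R ∧ G.Reachable v r) :
    ∃ f, IsParentMap R f ∧ parentGraph f = G := by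
  choose ρ hρ hρu using h
  have hρ_eq {v w : V} (hvw : G.Reachable v w) : ρ w = ρ v :=
    hρu v _ ⟨(hρ w).1, hvw.trans (hρ w).2⟩
  have hρ_mem {v : V} (hv : v ∈ R) : ρ v = v := (hρu v v ⟨hv, .refl v⟩).symm
  -- every non-root has a neighbour one step closer to its root; it becomes the parent
  have hparent (v : V) : ∃ w, (v ∈ R ∧ w = v) ∨
      (v ∉ R ∧ G.Adj v w ∧ G.dist (ρ v) w + 1 = G.dist (ρ v) v) := by
    by_cases hv : v ∈ R
    · exact ⟨v, .inl ⟨hv, rfl⟩⟩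
    · obtain ⟨w, hw⟩ := (hρ v).2.symm.exists_adj_dist_add_one fun h => hv (h ▸ (hρ v).1)
      exact ⟨w, .inr ⟨hv, hw⟩⟩
  choose f hf using hparent
  have hf_mem {v : V} (hv : v ∈ R) : f v = v := by grind
  have hf_adj {v : V} (hv : v ∉ R) :
      G.Adj v (f v) ∧ G.dist (ρ v) (f v) + 1 = G.dist (ρ v) v := by
    grind
  have hf_closer {v w : V} (hadj : G.Adj v w) (hd : G.dist (ρ v) w + 1 = G.dist (ρ v) v) :
      f v = w := by
    have hv : v ∉ R := fun hv => by simp [hρ_mem hv] at hd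
    exact hG.eq_of_adj_of_dist_add_one (hρ v).2.symm (hf_adj hv).1 hadj (hf_adj hv).2 hd
  refine ⟨f, ⟨fun r hr => hf_mem hr, exists_iterate_mem_of_lt (fun v => G.dist (ρ v) v) ?_⟩,
    ?_⟩
  · intro v hv
    rw [hρ_eq (hf_adj hv).1.reachable, ← (hf_adj hv).2]
    exact Nat.lt_succ_self _
  · ext v w
    rw [parentGraph_adj]
    refine ⟨fun ⟨hne, hvw⟩ => ?_, fun hadj => ⟨hadj.ne, ?_⟩⟩
    · rcases hvw with rfl | rfl
      · exact (hf_adj fun hv => hne (hf_mem hv).symm).1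
      · exact (hf_adj fun hw => hne (hf_mem hw)).1.symm
    · rcases hG.dist_eq_dist_add_one_of_adj_of_reachable (ρ v) hadj (hρ v).2.symm with hd | hd
      · exact .inl (hf_closer hadj hd.symm)
      · rw [← hρ_eq hadj.reachable] at hd
        exact .inr (hf_closer hadj.symm hd.symm)

noncomputable def parentMapEquiv (R : Finset V) : {f // IsParentMap R f} ≃
    {G : SimpleGraph V // G.IsAcyclic ∧ ∀ v, ∃! r, r ∈ R ∧ G.Reachable v r} :=
  Equiv.ofBijective (fun f => ⟨parentGraph f.1, f.2.isAcyclic, f.2.existsUnique_root⟩)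
    ⟨fun f g h => Subtype.ext (f.2.eq_of_parentGraph_eq g.2 (congrArg Subtype.val h)),
      fun G => by
        obtain ⟨f, hf, hfG⟩ := exists_isParentMap_parentGraph_eq G.2.1 G.2.2
        exact ⟨⟨f, hf⟩, Subtype.ext hfG⟩⟩

end Forest

/-- The number of forests on vertex set `[n]` consisting of `k` rooted trees with a
prescribed root set `R` of size `k` (acyclic graphs on `Fin n` in which every vertex is
connected to exactly one root) equals `k · n^{n-k-1}`. -/
theorem stmt13 (n k : ℕ) (hkn : k < n) (R : Finset (Fin n)) (hR : R.card = k) :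
    Nat.card {G : SimpleGraph (Fin n) //
        G.IsAcyclic ∧ ∀ v : Fin n, ∃! r : Fin n, r ∈ R ∧ G.Reachable v r} =
      k * n ^ (n - k - 1) := by
  rw [← Nat.card_congr (parentMapEquiv R), card_subtype_isParentMap]
  have h := card_parentMaps_mul_card R
  rw [Fintype.card_fin, hR, show n - k = n - k - 1 + 1 by omega, pow_succ, ← mul_assoc] at h
  exact Nat.eq_of_mul_eq_mul_right (by omega) h
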